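/- arXiv:1303.6351 — 2 statements merged into one kernel-verified Lean document; each statement's English description precedes it below -/
import Mathlib

section
/- (Calderón–Zygmund decomposition.) Let Q be a cube in ℝ^n, let f ∈ L¹(Q), and let M ≥ (1/|Q|) ∫_Q |f|. Then there exists a countable collection {Q_j} of pairwise disjoint open subcubes of Q such that |f(x)| ≤ M for almost every x ∈ Q \ ⋃_j Q_j, and M < (1/|Q_j|) ∫_{Q_j} |f(x)| dx ≤ 2^n M for every j; consequently Σ_j |Q_j| ≤ (1/M) ∫_Q |f|. -/
open MeasureTheory ENNReal Metric SchwartzMap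
open scoped FourierTransform SchwartzMap

/-- The (closed) cube in `ℝⁿ` with corner `a` and side length `l`. -/
def cube {n : ℕ} (a : Fin n → ℝ) (l : ℝ) : Set (EuclideanSpace ℝ (Fin n)) :=
  {x | ∀ i, x i ∈ Set.Icc (a i) (a i + l)}

/-- The mean oscillation of `f` over the cube with corner `a` and side length `l`. -/
noncomputable def oscAvg {n : ℕ} (f : EuclideanSpace ℝ (Fin n) → ℝ) (a : Fin n → ℝ) (l : ℝ) : ℝ :=
  ⨍ x in cube a l, |f x - ⨍ y in cube a l, f y|

/-- The BMO seminorm: the supremum of mean oscillations over all cubes. -/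
noncomputable def bmoSeminorm {n : ℕ} (f : EuclideanSpace ℝ (Fin n) → ℝ) : ℝ :=
  sSup {r : ℝ | ∃ a l, 0 < l ∧ r = oscAvg f a l}

/-! A stopping-time argument on the dyadic subcubes of `Q`: select the dyadic cubes on which the
average of `|f|` exceeds `M` while the averages over all their dyadic ancestors do not. As the
average over `Q` is at most `M`, each selected cube has a parent with average at most `M` and
`2ⁿ` times its volume, which gives the upper bound `2ⁿ M`. Dyadic cubes are nested or disjoint,
and maximality excludes nesting. At a point outside every selected cube all dyadic averages are
at most `M`; since dyadic cubes are balls for the sup norm, the Lebesgue differentiation theorem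
for doubling measures shows that they converge to `|f x|` almost everywhere. Finally
`M |Qⱼ| < ∫_{Qⱼ} |f|` summed over the disjoint `Qⱼ` bounds `∑ⱼ |Qⱼ|`. -/

namespace MeasureTheory

variable {α : Type*} [MeasurableSpace α] {μ : Measure α} {g : α → ℝ} {M : ℝ}

theorem setAverage_le_mul_setAverage {s t : Set α} (hst : s ⊆ t) (hs : μ s ≠ 0)
    (ht : μ t ≠ ∞) (hg : 0 ≤ᵐ[μ.restrict t] g) (hgt : IntegrableOn g t μ) :
    ⨍ x in s, g x ∂μ ≤ μ.real t / μ.real s * ⨍ x in t, g x ∂μ := by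
  have hs' : 0 < μ.real s := ENNReal.toReal_pos hs (ne_top_of_le_ne_top ht (measure_mono hst))
  rw [div_mul_eq_mul_div, ← smul_eq_mul, measure_smul_setAverage _ ht, setAverage_eq,
    smul_eq_mul, inv_mul_eq_div]
  exact div_le_div_of_nonneg_right (setIntegral_mono_set hgt hg hst.eventuallyLE) hs'.le

theorem ofReal_mul_measure_le_lintegral {s : Set α} (hM : 0 < M) (hg : 0 ≤ᵐ[μ.restrict s] g)
    (hgs : IntegrableOn g s μ) (havg : M ≤ ⨍ x in s, g x ∂μ) :
    ENNReal.ofReal M * μ s ≤ ∫⁻ x in s, ENNReal.ofReal (g x) ∂μ := by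
  -- an average over a set of infinite measure is `0`
  have hs : μ s ≠ ∞ := fun hs => by
    simp [setAverage_eq, measureReal_def, hs] at havg
    linarith
  calc ENNReal.ofReal M * μ s = ENNReal.ofReal (M * μ.real s) := by
        rw [ENNReal.ofReal_mul hM.le, ofReal_measureReal hs]
    _ ≤ ENNReal.ofReal (μ.real s * ⨍ x in s, g x ∂μ) := by
        rw [mul_comm]; gcongr
    _ = ∫⁻ x in s, ENNReal.ofReal (g x) ∂μ := by
        rw [← smul_eq_mul, measure_smul_setAverage _ hs,
          ofReal_integral_eq_lintegral_ofReal hgs hg]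

theorem tsum_measure_le_of_le_setAverage {ι : Type*} [Countable ι] {s : ι → Set α} {t : Set α}
    (hM : 0 < M) (hs : ∀ i, MeasurableSet (s i)) (hdisj : Pairwise (Function.onFun Disjoint s))
    (hst : ∀ i, s i ⊆ t) (hg : 0 ≤ᵐ[μ.restrict t] g) (hgt : IntegrableOn g t μ)
    (havg : ∀ i, M ≤ ⨍ x in s i, g x ∂μ) :
    ∑' i, μ (s i) ≤ ENNReal.ofReal (1 / M * ∫ x in t, g x ∂μ) := by
  have key : ENNReal.ofReal M * ∑' i, μ (s i) ≤ ENNReal.ofReal (∫ x in t, g x ∂μ) :=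
    calc ENNReal.ofReal M * ∑' i, μ (s i) = ∑' i, ENNReal.ofReal M * μ (s i) :=
          ENNReal.tsum_mul_left.symm
      _ ≤ ∑' i, ∫⁻ x in s i, ENNReal.ofReal (g x) ∂μ :=
          ENNReal.tsum_le_tsum fun i => ofReal_mul_measure_le_lintegral hM
            (ae_restrict_of_ae_restrict_of_subset (hst i) hg) (hgt.mono_set (hst i)) (havg i)
      _ = ∫⁻ x in ⋃ i, s i, ENNReal.ofReal (g x) ∂μ := (lintegral_iUnion hs hdisj _).symm
      _ ≤ ∫⁻ x in t, ENNReal.ofReal (g x) ∂μ := lintegral_mono_set (Set.iUnion_subset hst)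
      _ = ENNReal.ofReal (∫ x in t, g x ∂μ) := (ofReal_integral_eq_lintegral_ofReal hgt hg).symm
  rw [one_div_mul_eq_div, ENNReal.ofReal_div_of_pos hM, ENNReal.le_div_iff_mul_le
    (.inl (ENNReal.ofReal_pos.2 hM).ne') (.inl ENNReal.ofReal_ne_top), mul_comm]
  exact key

end MeasureTheory

theorem Set.exists_bijOn_nat {ι : Type*} [Countable ι] [Nonempty ι] (S : Set ι) :
    ∃ (J : Set ℕ) (p : ℕ → ι), Set.BijOn p J S := by
  obtain ⟨e, he⟩ := Countable.exists_injective_nat ι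
  have hbij := he.injOn.bijOn_image (s := S)
  exact ⟨_, _, hbij.symm hbij.invOn_invFunOn.symm⟩

namespace EuclideanSpace

variable {ι : Type*} [Fintype ι]

theorem volume_preimage_ofLp (s : Set (ι → ℝ)) :
    volume (WithLp.ofLp ⁻¹' s : Set (EuclideanSpace ℝ ι)) = volume s :=
  (volume_preserving_symm_measurableEquiv_toLp ι).measure_preimage_equiv s

theorem setAverage_preimage_ofLp {E : Type*} [NormedAddCommGroup E] [NormedSpace ℝ E]
    (g : (ι → ℝ) → E) (s : Set (ι → ℝ)) :
    ⨍ x in WithLp.ofLp ⁻¹' s, g (WithLp.ofLp x) ∂(volume : Measure (EuclideanSpace ℝ ι)) =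
      ⨍ y in s, g y := by
  rw [setAverage_eq, setAverage_eq, measureReal_def, measureReal_def, volume_preimage_ofLp]
  congr 1
  exact (volume_preserving_symm_measurableEquiv_toLp ι).setIntegral_preimage_emb
    (MeasurableEquiv.measurableEmbedding _) g s

theorem volume_coord_eq (i : ι) (t : ℝ) : volume {x : EuclideanSpace ℝ ι | x i = t} = 0 := by
  have h := volume_preimage_ofLp {y : ι → ℝ | y i = t}
  rw [volume_pi, Measure.pi_hyperplane] at h
  exact h

end EuclideanSpace

namespace CalderonZygmund

open Filter Topology EuclideanSpace

variable {n : ℕ}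

def openCube (b : Fin n → ℝ) (m : ℝ) : Set (EuclideanSpace ℝ (Fin n)) :=
  {x | ∀ i, x i ∈ Set.Ioo (b i) (b i + m)}

theorem openCube_subset_cube (b : Fin n → ℝ) (m : ℝ) : openCube b m ⊆ cube b m :=
  fun _ hx i => Set.Ioo_subset_Icc_self (hx i)

theorem cube_eq_preimage_pi (b : Fin n → ℝ) (m : ℝ) :
    cube b m = WithLp.ofLp ⁻¹' Set.univ.pi fun i => Set.Icc (b i) (b i + m) := by
  ext; simp only [cube, Set.mem_preimage, Set.mem_univ_pi, Set.mem_ofPred_eq]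

theorem openCube_eq_preimage_pi (b : Fin n → ℝ) (m : ℝ) :
    openCube b m = WithLp.ofLp ⁻¹' Set.univ.pi fun i => Set.Ioo (b i) (b i + m) := by
  ext; simp only [openCube, Set.mem_preimage, Set.mem_univ_pi, Set.mem_ofPred_eq]

theorem measurableSet_cube (b : Fin n → ℝ) (m : ℝ) : MeasurableSet (cube b m) := by
  rw [cube_eq_preimage_pi]
  exact (MeasurableSet.univ_pi fun _ => measurableSet_Icc).preimage (by fun_prop)

theorem measurableSet_openCube (b : Fin n → ℝ) (m : ℝ) : MeasurableSet (openCube b m) := by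
  rw [openCube_eq_preimage_pi]
  exact (MeasurableSet.univ_pi fun _ => measurableSet_Ioo).preimage (by fun_prop)

theorem volume_cube (b : Fin n → ℝ) (m : ℝ) : volume (cube b m) = ENNReal.ofReal m ^ n := by
  rw [cube_eq_preimage_pi, volume_preimage_ofLp, volume_pi_pi]
  simp [Real.volume_Icc]

theorem volume_openCube (b : Fin n → ℝ) (m : ℝ) :
    volume (openCube b m) = ENNReal.ofReal m ^ n := by
  rw [openCube_eq_preimage_pi, volume_preimage_ofLp, volume_pi_pi]
  simp [Real.volume_Ioo]

theorem openCube_ae_eq_cube (b : Fin n → ℝ) (m : ℝ) : openCube b m =ᵐ[volume] cube b m :=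
  ae_eq_of_subset_of_measure_ge (openCube_subset_cube b m)
    (by rw [volume_cube, volume_openCube])
    (measurableSet_openCube b m).nullMeasurableSet (by simp [volume_cube])

theorem cube_eq_preimage_closedBall (b : Fin n → ℝ) {m : ℝ} (hm : 0 ≤ m) :
    cube b m = WithLp.ofLp ⁻¹' closedBall (fun i => b i + m / 2) (m / 2) := by
  ext x
  simp only [cube, Set.mem_preimage, closedBall_pi _ (by positivity : 0 ≤ m / 2),
    Real.closedBall_eq_Icc, Set.mem_ofPred_eq, Set.mem_univ_pi, add_sub_cancel_right, add_assoc,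
    add_halves]

theorem ae_tendsto_setAverage_cube {E : Type*} [NormedAddCommGroup E] [NormedSpace ℝ E]
    [CompleteSpace E] {g : EuclideanSpace ℝ (Fin n) → E} (hg : Integrable g) :
    ∀ᵐ x, ∀ (b : ℕ → Fin n → ℝ) (m : ℕ → ℝ), Tendsto m atTop (𝓝[>] 0) →
      (∀ k, x ∈ cube (b k) (m k)) →
      Tendsto (fun k => ⨍ y in cube (b k) (m k), g y) atTop (𝓝 (g x)) := by
  have hpres := PiLp.volume_preserving_ofLp (Fin n)
  have hG : LocallyIntegrable (fun y => g (WithLp.toLp 2 y)) volume :=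
    (PiLp.volume_preserving_toLp (Fin n)).integrable_comp_of_integrable hg |>.locallyIntegrable
  filter_upwards [hpres.quasiMeasurePreserving.ae
    (IsUnifLocDoublingMeasure.ae_tendsto_average volume hG 1)] with x hx b m hm hmem
  have hpos : ∀ᶠ k in atTop, 0 < m k := hm.eventually self_mem_nhdsWithin
  have hhalf : Tendsto (fun k => m k / 2) atTop (𝓝[>] 0) := by
    refine tendsto_nhdsWithin_iff.2 ⟨?_, hpos.mono fun k hk => half_pos hk⟩
    simpa using (tendsto_nhdsWithin_iff.1 hm).1.div_const 2
  refine (hx (fun k i => b k i + m k / 2) (fun k => m k / 2) hhalf ?_).congr' ?_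
  · filter_upwards [hpos] with k hk
    simpa only [one_mul, cube_eq_preimage_closedBall _ hk.le, Set.mem_preimage] using hmem k
  · filter_upwards [hpos] with k hk
    rw [cube_eq_preimage_closedBall _ hk.le]
    exact (setAverage_preimage_ofLp (fun y => g (WithLp.toLp 2 y)) _).symm

def dyadicCube (a : Fin n → ℝ) (l : ℝ) (k : ℕ) (v : Fin n → ℕ) :
    Set (EuclideanSpace ℝ (Fin n)) :=
  openCube (fun i => a i + l / 2 ^ k * v i) (l / 2 ^ k)

noncomputable def dyadicIndex (a : Fin n → ℝ) (l : ℝ) (k : ℕ) (x : EuclideanSpace ℝ (Fin n)) :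
    Fin n → ℕ :=
  fun i => ⌊(x i - a i) / (l / 2 ^ k)⌋₊

def dyadicGrid (a : Fin n → ℝ) (l : ℝ) : Set (EuclideanSpace ℝ (Fin n)) :=
  {x | ∃ i k, ∃ m : ℕ, x i = a i + l / 2 ^ k * m}

variable {a : Fin n → ℝ} {l : ℝ} {k : ℕ} {v : Fin n → ℕ} {x : EuclideanSpace ℝ (Fin n)}

theorem dyadicCube_succ_subset (hl : 0 ≤ l) (k : ℕ) (v : Fin n → ℕ) :
    dyadicCube a l (k + 1) v ⊆ dyadicCube a l k (fun i => v i / 2) := by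
  intro x hx i
  obtain ⟨h₁, h₂⟩ := hx i
  have hs : l / 2 ^ k = 2 * (l / 2 ^ (k + 1)) := by rw [pow_succ]; field_simp
  have hs₀ : 0 ≤ l / 2 ^ (k + 1) := by positivity
  have hlo : (2 * (v i / 2) : ℕ) ≤ (v i : ℝ) := by exact_mod_cast Nat.mul_div_le (v i) 2
  have hhi : (v i : ℝ) + 1 ≤ (2 * (v i / 2) + 2 : ℕ) := by exact_mod_cast (by omega)
  push_cast at hlo hhi
  rw [hs]
  constructor <;> nlinarith

theorem dyadicCube_subset_ancestor (hl : 0 ≤ l) {k' k : ℕ} (h : k' ≤ k) (v : Fin n → ℕ) :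
    dyadicCube a l k v ⊆ dyadicCube a l k' (fun i => v i / 2 ^ (k - k')) := by
  induction k, h using Nat.le_induction generalizing v with
  | base => simp
  | succ k hk ih =>
    refine (dyadicCube_succ_subset hl k v).trans ((ih _).trans_eq ?_)
    simp only [Nat.div_div_eq_div_mul, Nat.sub_add_comm hk, pow_succ']

theorem dyadicIndex_eq_of_mem (hl : 0 < l) (hx : x ∈ dyadicCube a l k v) :
    dyadicIndex a l k x = v := by
  funext i
  obtain ⟨h₁, h₂⟩ := hx i
  have hs : 0 < l / 2 ^ k := by positivity
  have hlo : (v i : ℝ) ≤ (x i - a i) / (l / 2 ^ k) := by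
    rw [le_div_iff₀ hs]; linarith
  have hhi : (x i - a i) / (l / 2 ^ k) < v i + 1 := by
    rw [div_lt_iff₀ hs]; linarith
  exact (Nat.floor_eq_iff ((Nat.cast_nonneg _).trans hlo)).2 ⟨hlo, hhi⟩

theorem dyadicCube_index_eq_of_mem_inter (hl : 0 < l) {k' : ℕ} {v' : Fin n → ℕ} (h : k ≤ k')
    (hx : x ∈ dyadicCube a l k v) (hx' : x ∈ dyadicCube a l k' v') :
    v = fun i => v' i / 2 ^ (k' - k) :=
  (dyadicIndex_eq_of_mem hl hx).symm.trans
    (dyadicIndex_eq_of_mem hl (dyadicCube_subset_ancestor hl.le h v' hx'))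

theorem mem_dyadicCube_dyadicIndex (hl : 0 < l) (hx : x ∈ cube a l) (hg : x ∉ dyadicGrid a l)
    (k : ℕ) : x ∈ dyadicCube a l k (dyadicIndex a l k x) := by
  intro i
  have hs : 0 < l / 2 ^ k := by positivity
  have ht : 0 ≤ (x i - a i) / (l / 2 ^ k) := div_nonneg (by linarith [(hx i).1]) hs.le
  have hlo := Nat.floor_le ht
  have hhi := Nat.lt_floor_add_one ((x i - a i) / (l / 2 ^ k))
  rw [le_div_iff₀ hs] at hlo
  rw [div_lt_iff₀ hs] at hhi
  have hne : x i ≠ a i + l / 2 ^ k * ⌊(x i - a i) / (l / 2 ^ k)⌋₊ :=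
    fun h => hg ⟨i, k, _, h⟩
  simp only [dyadicIndex, Set.mem_Ioo]
  constructor
  · exact lt_of_le_of_ne (by linarith) (Ne.symm hne)
  · linarith

theorem lt_two_pow_of_mem_dyadicCube (hl : 0 < l) (hx : x ∈ dyadicCube a l k v)
    (hxc : x ∈ cube a l) (i : Fin n) : v i < 2 ^ k := by
  have h : l / 2 ^ k * v i < l / 2 ^ k * 2 ^ k := by
    rw [div_mul_cancel₀ _ (by positivity)]; linarith [(hx i).1, (hxc i).2]
  exact_mod_cast lt_of_mul_lt_mul_left h (by positivity)

theorem dyadicCube_subset_cube (hl : 0 ≤ l) (hv : ∀ i, v i < 2 ^ k) :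
    dyadicCube a l k v ⊆ cube a l := by
  intro x hx i
  obtain ⟨h₁, h₂⟩ := hx i
  have hv' : (v i : ℝ) + 1 ≤ 2 ^ k := by exact_mod_cast hv i
  have h : l / 2 ^ k * (v i + 1) ≤ l := by
    calc l / 2 ^ k * (v i + 1) ≤ l / 2 ^ k * 2 ^ k := by gcongr
      _ = l := div_mul_cancel₀ _ (by positivity)
  constructor <;> nlinarith [show 0 ≤ l / 2 ^ k * v i by positivity]

theorem dyadicCube_zero (a : Fin n → ℝ) (l : ℝ) : dyadicCube a l 0 0 = openCube a l := by
  simp [dyadicCube]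

theorem measureReal_dyadicCube (hl : 0 ≤ l) (k : ℕ) (v : Fin n → ℕ) :
    volume.real (dyadicCube a l k v) = (l / 2 ^ k) ^ n := by
  rw [measureReal_def, dyadicCube, volume_openCube, ENNReal.toReal_pow,
    ENNReal.toReal_ofReal (by positivity)]

theorem ae_notMem_dyadicGrid (a : Fin n → ℝ) (l : ℝ) : ∀ᵐ x, x ∉ dyadicGrid a l := by
  have hgrid : dyadicGrid a l = ⋃ (i) (k : ℕ) (m : ℕ), {x | x i = a i + l / 2 ^ k * m} := by
    ext; simp [dyadicGrid]
  rw [← measure_eq_zero_iff_ae_notMem, hgrid]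
  simp [measure_iUnion_null_iff, volume_coord_eq]

theorem ae_tendsto_setAverage_dyadicCube {E : Type*} [NormedAddCommGroup E] [NormedSpace ℝ E]
    [CompleteSpace E] {g : EuclideanSpace ℝ (Fin n) → E} (hl : 0 < l)
    (hg : IntegrableOn g (cube a l)) :
    ∀ᵐ x ∂volume.restrict (cube a l), x ∉ dyadicGrid a l →
      Tendsto (fun k => ⨍ y in dyadicCube a l k (dyadicIndex a l k x), g y) atTop (𝓝 (g x)) := by
  have hside : Tendsto (fun k : ℕ => l / 2 ^ k) atTop (𝓝[>] 0) :=
    tendsto_nhdsWithin_iff.2 ⟨tendsto_const_nhds.div_atTop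
      (tendsto_pow_atTop_atTop_of_one_lt one_lt_two),
      .of_forall fun k => show 0 < l / 2 ^ k by positivity⟩
  filter_upwards [ae_restrict_mem (measurableSet_cube a l),
    ae_restrict_of_ae (ae_tendsto_setAverage_cube (hg.integrable_indicator
      (measurableSet_cube a l)))] with x hxc hx hxg
  have hmem := mem_dyadicCube_dyadicIndex hl hxc hxg
  have hsub k : dyadicCube a l k (dyadicIndex a l k x) ⊆ cube a l :=
    dyadicCube_subset_cube hl.le fun i => lt_two_pow_of_mem_dyadicCube hl (hmem k) hxc i
  rw [← Set.indicator_of_mem hxc g]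
  refine (hx _ _ hside fun k => openCube_subset_cube _ _ (hmem k)).congr fun k => ?_
  rw [← setAverage_congr (openCube_ae_eq_cube _ _)]
  exact setAverage_congr_fun (measurableSet_openCube _ _)
    (.of_forall fun y hy => Set.indicator_of_mem (hsub k hy) g)

theorem setAverage_dyadicCube_succ_le (hl : 0 < l) {g : EuclideanSpace ℝ (Fin n) → ℝ}
    (hg₀ : ∀ x, 0 ≤ g x) (hg : IntegrableOn g (cube a l)) (hv : ∀ i, v i < 2 ^ (k + 1)) :
    ⨍ x in dyadicCube a l (k + 1) v, g x ≤
      2 ^ n * ⨍ x in dyadicCube a l k (fun i => v i / 2), g x := by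
  have hparent : dyadicCube a l k (fun i => v i / 2) ⊆ cube a l :=
    dyadicCube_subset_cube hl.le fun i => by have := hv i; rw [pow_succ] at this; omega
  have hvol : volume (dyadicCube a l (k + 1) v) ≠ 0 := by
    rw [dyadicCube, volume_openCube]
    exact pow_ne_zero _ (ENNReal.ofReal_pos.2 (by positivity)).ne'
  convert setAverage_le_mul_setAverage (dyadicCube_succ_subset hl.le k v) hvol
    (measure_ne_top_of_subset hparent (by simp [volume_cube])) (.of_forall hg₀)
    (hg.mono_set hparent) using 2
  rw [measureReal_dyadicCube hl.le, measureReal_dyadicCube hl.le, ← div_pow, pow_succ]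
  congr 1
  field_simp

def IsMaximalDyadic (f : EuclideanSpace ℝ (Fin n) → ℝ) (M : ℝ) (a : Fin n → ℝ) (l : ℝ) (k : ℕ)
    (v : Fin n → ℕ) : Prop :=
  (∀ i, v i < 2 ^ k) ∧ M < ⨍ x in dyadicCube a l k v, |f x| ∧
    ∀ k' < k, ⨍ x in dyadicCube a l k' (fun i => v i / 2 ^ (k - k')), |f x| ≤ M

variable {f : EuclideanSpace ℝ (Fin n) → ℝ} {M : ℝ}

theorem IsMaximalDyadic.level_pos (hM : ⨍ x in cube a l, |f x| ≤ M)
    (h : IsMaximalDyadic f M a l k v) : 0 < k := by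
  refine Nat.pos_of_ne_zero fun hk => h.2.1.not_ge ?_
  subst hk
  obtain rfl : v = 0 := funext fun i => Nat.lt_one_iff.1 (h.1 i)
  rwa [dyadicCube_zero, setAverage_congr (openCube_ae_eq_cube a l)]

theorem IsMaximalDyadic.setAverage_le (hl : 0 < l) (hf : IntegrableOn f (cube a l))
    (hM : ⨍ x in cube a l, |f x| ≤ M) (h : IsMaximalDyadic f M a l k v) :
    ⨍ x in dyadicCube a l k v, |f x| ≤ 2 ^ n * M := by
  obtain ⟨k, rfl⟩ := Nat.exists_eq_add_one_of_ne_zero (h.level_pos hM).ne'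
  calc ⨍ x in dyadicCube a l (k + 1) v, |f x|
      ≤ 2 ^ n * ⨍ x in dyadicCube a l k (fun i => v i / 2), |f x| :=
        setAverage_dyadicCube_succ_le hl (fun x => abs_nonneg (f x)) hf.abs h.1
    _ ≤ 2 ^ n * M := by
        gcongr
        simpa using h.2.2 k k.lt_succ_self

theorem IsMaximalDyadic.pos (hl : 0 < l) (hf : IntegrableOn f (cube a l))
    (hM : ⨍ x in cube a l, |f x| ≤ M) (h : IsMaximalDyadic f M a l k v) : 0 < M := by
  have := h.2.1.trans_le (h.setAverage_le hl hf hM)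
  nlinarith [one_le_pow₀ (M₀ := ℝ) one_le_two (n := n)]

theorem IsMaximalDyadic.disjoint (hl : 0 < l) {k' : ℕ} {v' : Fin n → ℕ}
    (h : IsMaximalDyadic f M a l k v) (h' : IsMaximalDyadic f M a l k' v')
    (hne : (k, v) ≠ (k', v')) : Disjoint (dyadicCube a l k v) (dyadicCube a l k' v') := by
  wlog hkk : k ≤ k' generalizing k k' v v'
  · exact (this h' h hne.symm (le_of_not_ge hkk)).symm
  refine Set.disjoint_left.2 fun x hx hx' => ?_
  have hv := dyadicCube_index_eq_of_mem_inter hl hkk hx hx'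
  rcases hkk.eq_or_lt with rfl | hlt
  · exact hne (by simp [hv])
  · exact (h'.2.2 k hlt).not_gt (hv ▸ h.2.1)

theorem exists_isMaximalDyadic (hl : 0 < l) (hxc : x ∈ cube a l) (hxg : x ∉ dyadicGrid a l)
    (hk : M < ⨍ y in dyadicCube a l k (dyadicIndex a l k x), |f y|) :
    ∃ k, IsMaximalDyadic f M a l k (dyadicIndex a l k x) ∧
      x ∈ dyadicCube a l k (dyadicIndex a l k x) := by
  classical
  have hex : ∃ k, M < ⨍ y in dyadicCube a l k (dyadicIndex a l k x), |f y| := ⟨k, hk⟩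
  have hmem := mem_dyadicCube_dyadicIndex hl hxc hxg
  refine ⟨Nat.find hex, ⟨lt_two_pow_of_mem_dyadicCube hl (hmem _) hxc, Nat.find_spec hex,
    fun k' hk' => ?_⟩, hmem _⟩
  rw [← dyadicCube_index_eq_of_mem_inter hl hk'.le (hmem k') (hmem _)]
  exact not_lt.1 (Nat.find_min hex hk')

theorem ae_abs_le_of_forall_notMem (hl : 0 < l) (hf : IntegrableOn f (cube a l)) :
    ∀ᵐ x ∂volume.restrict (cube a l),
      (∀ k v, IsMaximalDyadic f M a l k v → x ∉ dyadicCube a l k v) → |f x| ≤ M := by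
  filter_upwards [ae_restrict_mem (measurableSet_cube a l),
    ae_restrict_of_ae (ae_notMem_dyadicGrid a l),
    ae_tendsto_setAverage_dyadicCube hl hf.abs] with x hxc hxg htend hx
  refine le_of_tendsto' (htend hxg) fun k => not_lt.1 fun hk => ?_
  obtain ⟨k', hmax, hmem⟩ := exists_isMaximalDyadic hl hxc hxg hk
  exact hx _ _ hmax hmem

end CalderonZygmund

open CalderonZygmund

theorem calderon_zygmund_decomposition_general (n : ℕ)
    (a : Fin n → ℝ) (l : ℝ) (hl : 0 < l)
    (f : EuclideanSpace ℝ (Fin n) → ℝ) (hf : IntegrableOn f (cube a l) volume)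
    (M : ℝ) (hM : (⨍ x in cube a l, |f x|) ≤ M) :
    ∃ (Q : ℕ → Set (EuclideanSpace ℝ (Fin n))) (J : Set ℕ),
      (∀ j ∈ J, ∃ (b : Fin n → ℝ) (m : ℝ), 0 < m ∧
        Q j = {x | ∀ i, x i ∈ Set.Ioo (b i) (b i + m)} ∧ Q j ⊆ cube a l) ∧
      (J.Pairwise fun i j => Disjoint (Q i) (Q j)) ∧
      (∀ᵐ x ∂volume.restrict (cube a l \ ⋃ j ∈ J, Q j), |f x| ≤ M) ∧
      (∀ j ∈ J, M < (⨍ x in Q j, |f x|) ∧ (⨍ x in Q j, |f x|) ≤ 2 ^ n * M) ∧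
      ∑' j : J, volume (Q j) ≤ ENNReal.ofReal ((1 / M) * ∫ x in cube a l, |f x|) := by
  obtain ⟨J, p, hp⟩ :=
    Set.exists_bijOn_nat {p : ℕ × (Fin n → ℕ) | IsMaximalDyadic f M a l p.1 p.2}
  have hmax j (hj : j ∈ J) : IsMaximalDyadic f M a l (p j).1 (p j).2 := hp.mapsTo hj
  set Q := fun j => dyadicCube a l (p j).1 (p j).2
  have hdisj : J.Pairwise fun i j => Disjoint (Q i) (Q j) := fun i hi j hj hij =>
    (hmax i hi).disjoint hl (hmax j hj) (hp.injOn.ne hi hj hij)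
  refine ⟨Q, J, fun j hj =>
    ⟨_, _, by positivity, rfl, dyadicCube_subset_cube hl.le (hmax j hj).1⟩, hdisj, ?_,
    fun j hj => ⟨(hmax j hj).2.1, (hmax j hj).setAverage_le hl hf hM⟩, ?_⟩
  · have hmeas : MeasurableSet (cube a l \ ⋃ j ∈ J, Q j) := (measurableSet_cube a l).diff
      (.biUnion J.to_countable fun j _ => measurableSet_openCube _ _)
    filter_upwards [ae_restrict_mem hmeas, ae_restrict_of_ae_restrict_of_subset Set.sdiff_subset
      (ae_abs_le_of_forall_notMem hl hf)] with x hx hfx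
    refine hfx fun k v hkv hxkv => hx.2 ?_
    obtain ⟨j, hj, hjp⟩ := hp.surjOn (show (k, v) ∈ _ from hkv)
    exact Set.mem_biUnion hj (by simpa [Q, hjp] using hxkv)
  · rcases J.eq_empty_or_nonempty with hJ | ⟨j, hj⟩
    · simp [hJ]
    exact tsum_measure_le_of_le_setAverage ((hmax j hj).pos hl hf hM)
      (fun j => measurableSet_openCube _ _)
      (fun i j hij => hdisj i.2 j.2 (Subtype.coe_ne_coe.2 hij))
      (fun j => dyadicCube_subset_cube hl.le (hmax j j.2).1)
      (.of_forall fun x => abs_nonneg (f x)) hf.abs (fun j => (hmax j j.2).2.1.le)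

/-- **Calderón–Zygmund decomposition.** Let `Q = cube a l` be a cube in `ℝⁿ`, `f ∈ L¹(Q)` and
`M ≥ ⨍_Q |f|`.  Then there is a countable collection `{Q j | j ∈ J}` of pairwise disjoint open
subcubes of `Q` such that `|f x| ≤ M` for a.e. `x ∈ Q \ ⋃ⱼ Qⱼ`,
`M < ⨍_{Qⱼ} |f| ≤ 2ⁿ M` for every `j ∈ J`, and `∑ⱼ |Qⱼ| ≤ (1/M) ∫_Q |f|`. -/
theorem calderon_zygmund_decomposition (n : ℕ) (hn : 0 < n)
    (a : Fin n → ℝ) (l : ℝ) (hl : 0 < l)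
    (f : EuclideanSpace ℝ (Fin n) → ℝ) (hf : IntegrableOn f (cube a l) volume)
    (M : ℝ) (hM : (⨍ x in cube a l, |f x|) ≤ M) :
    ∃ (Q : ℕ → Set (EuclideanSpace ℝ (Fin n))) (J : Set ℕ),
      (∀ j ∈ J, ∃ (b : Fin n → ℝ) (m : ℝ), 0 < m ∧
        Q j = {x | ∀ i, x i ∈ Set.Ioo (b i) (b i + m)} ∧ Q j ⊆ cube a l) ∧
      (J.Pairwise fun i j => Disjoint (Q i) (Q j)) ∧
      (∀ᵐ x ∂volume.restrict (cube a l \ ⋃ j ∈ J, Q j), |f x| ≤ M) ∧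
      (∀ j ∈ J, M < (⨍ x in Q j, |f x|) ∧ (⨍ x in Q j, |f x|) ≤ 2 ^ n * M) ∧
      ∑' j : J, volume (Q j) ≤ ENNReal.ofReal ((1 / M) * ∫ x in cube a l, |f x|) :=
  calderon_zygmund_decomposition_general n a l hl f hf M hM
end

section
/- (John–Nirenberg inequality.) There exist constants c > 0 and C > 0 depending only on n such that if f ∈ BMO(ℝ^n) with ‖f‖_{BMO} > 0, then for every cube Q ⊂ ℝ^n and every α ≥ ‖f‖_{BMO}, |{x ∈ Q : |f(x) − f_Q| > α}| ≤ (C/‖f‖_{BMO}) e^{−cα/‖f‖_{BMO}} ∫_Q |f − f_Q| dx. -/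
open MeasureTheory ENNReal Metric

/-!
Calderón–Zygmund decomposition of a cube `Q` at height `2B`, `B = ‖f‖_BMO`, for `|f - f_Q|` gives
maximal dyadic subcubes `Q_j` with `∑ |Q_j| ≤ (2B)⁻¹ ∫_Q |f - f_Q|` and `|f_{Q_j} - f_Q| ≤ 2^(n+1) B`,
while `|f - f_Q| ≤ 2B` a.e. off `⋃ Q_j` by Lebesgue differentiation along dyadic cubes. So raising
the level by `2^(n+1) B` passes from `Q` to the `Q_j`, and as `∫_{Q_j} |f - f_{Q_j}| ≤ B |Q_j|`, each
such step halves the bound on the measure of the level set. Chebyshev's inequality at level `B`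
starts the induction.
-/

open Set Filter Topology Function
open scoped NNReal

variable {n : ℕ}

theorem cube_eq_preimage (a : Fin n → ℝ) (l : ℝ) :
    cube a l =
      (MeasurableEquiv.toLp 2 (Fin n → ℝ)).symm ⁻¹' univ.pi fun i => Icc (a i) (a i + l) := by
  ext x
  simp only [cube, mem_preimage, mem_univ_pi]
  rfl

theorem isCompact_cube (a : Fin n → ℝ) (l : ℝ) : IsCompact (cube a l) := by
  rw [cube_eq_preimage]
  exact (EuclideanSpace.equiv (Fin n) ℝ).toHomeomorph.isCompact_preimage.2
    (isCompact_univ_pi fun _ => isCompact_Icc)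

theorem measurableSet_cube (a : Fin n → ℝ) (l : ℝ) : MeasurableSet (cube a l) :=
  (isCompact_cube a l).isClosed.measurableSet

theorem volume_cube (a : Fin n → ℝ) (l : ℝ) : volume (cube a l) = ENNReal.ofReal l ^ n := by
  rw [cube_eq_preimage,
    (EuclideanSpace.volume_preserving_symm_measurableEquiv_toLp (Fin n)).measure_preimage
      (MeasurableSet.univ_pi fun _ => measurableSet_Icc).nullMeasurableSet, volume_pi_pi]
  simp

theorem volume_cube_ne_zero (a : Fin n → ℝ) {l : ℝ} (hl : 0 < l) : volume (cube a l) ≠ 0 := by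
  simp [volume_cube, hl]

theorem volume_cube_ne_top (a : Fin n → ℝ) (l : ℝ) : volume (cube a l) ≠ ⊤ := by
  simp [volume_cube]

theorem volume_setOf_apply_eq (i : Fin n) (c : ℝ) :
    volume {x : EuclideanSpace ℝ (Fin n) | x i = c} = 0 := by
  have hc : MeasurableSet {y : Fin n → ℝ | y i = c} :=
    measurableSet_eq_fun (measurable_pi_apply i) measurable_const
  exact ((EuclideanSpace.volume_preserving_symm_measurableEquiv_toLp (Fin n)).measure_preimage
    hc.nullMeasurableSet).trans (Measure.pi_hyperplane (fun _ => (volume : Measure ℝ)) i c)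

theorem cube_subset_closedBall {a : Fin n → ℝ} {l : ℝ} (hl : 0 ≤ l)
    {x : EuclideanSpace ℝ (Fin n)} (hx : x ∈ cube a l) : cube a l ⊆ closedBall x (l * √n) := by
  intro y hy
  have hcoord : ∀ i, dist (y i) (x i) ^ 2 ≤ l ^ 2 := fun i => by
    rw [Real.dist_eq, sq_abs]
    exact sq_le_sq' (by linarith [(hx i).2, (hy i).1]) (by linarith [(hx i).1, (hy i).2])
  calc dist y x = √(∑ i, dist (y i) (x i) ^ 2) := EuclideanSpace.dist_eq y x
    _ ≤ √(∑ _i : Fin n, l ^ 2) := Real.sqrt_le_sqrt (Finset.sum_le_sum fun i _ => hcoord i)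
    _ = l * √n := by simp [Real.sqrt_sq hl, mul_comm]

theorem closedBall_subset_cube (x : EuclideanSpace ℝ (Fin n)) (r : ℝ) :
    closedBall x r ⊆ cube (fun i => x i - r) (2 * r) := by
  intro y hy i
  have := abs_le.1 ((Real.dist_eq _ _).symm.trans_le ((PiLp.dist_apply_le y x i).trans hy))
  constructor <;> linarith [this.1, this.2]

def dyadicCube (a : Fin n → ℝ) (l : ℝ) (k : ℕ) (j : Fin n → ℕ) :
    Set (EuclideanSpace ℝ (Fin n)) :=
  cube (fun i => a i + j i * (l / 2 ^ k)) (l / 2 ^ k)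

noncomputable def dyadicIndex (a : Fin n → ℝ) (l : ℝ) (k : ℕ) (x : EuclideanSpace ℝ (Fin n)) :
    Fin n → ℕ :=
  fun i => ⌊(x i - a i) / (l / 2 ^ k)⌋₊

section Dyadic

variable {a : Fin n → ℝ} {l : ℝ}

theorem dyadicCube_zero (a : Fin n → ℝ) (l : ℝ) : dyadicCube a l 0 0 = cube a l := by
  simp [dyadicCube]

theorem volume_dyadicCube_eq_two_pow_mul (k : ℕ) (j j' : Fin n → ℕ) :
    volume (dyadicCube a l k j) = 2 ^ n * volume (dyadicCube a l (k + 1) j') := by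
  have h : l / 2 ^ k = 2 * (l / 2 ^ (k + 1)) := by ring
  rw [dyadicCube, dyadicCube, volume_cube, volume_cube, h, ENNReal.ofReal_mul zero_le_two,
    mul_pow, ENNReal.ofReal_ofNat]

theorem Icc_subset_Icc_natDiv {c h : ℝ} (hh : 0 ≤ h) (j d : ℕ) (hd : 0 < d) :
    Icc (c + j * h) (c + j * h + h) ⊆
      Icc (c + (j / d : ℕ) * (d * h)) (c + (j / d : ℕ) * (d * h) + d * h) := by
  have hlow : ((j / d : ℕ) : ℝ) * d ≤ j := by exact_mod_cast Nat.div_mul_le_self j d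
  have hup : (j : ℝ) + 1 ≤ ((j / d : ℕ) + 1) * d := by
    have : j + 1 ≤ (j / d + 1) * d := by rw [add_mul, one_mul]; exact Nat.lt_div_mul_add hd
    exact_mod_cast this
  intro y ⟨hy₁, hy₂⟩
  constructor <;> nlinarith

theorem dyadicCube_add_subset (hl : 0 ≤ l) (k m : ℕ) (j : Fin n → ℕ) :
    dyadicCube a l (k + m) j ⊆ dyadicCube a l k (fun i => j i / 2 ^ m) := by
  have h : l / 2 ^ k = ((2 ^ m : ℕ) : ℝ) * (l / 2 ^ (k + m)) := by
    rw [pow_add]; push_cast; field_simp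
  intro x hx i
  have := Icc_subset_Icc_natDiv (c := a i) (by positivity) (j i) (2 ^ m) (by positivity) (hx i)
  rwa [← h] at this

theorem dyadicCube_subset_cube (hl : 0 ≤ l) {k : ℕ} {j : Fin n → ℕ} (hj : ∀ i, j i < 2 ^ k) :
    dyadicCube a l k j ⊆ cube a l := by
  have := dyadicCube_add_subset (a := a) hl 0 k j
  simp only [zero_add, Nat.div_eq_of_lt (hj _)] at this
  rwa [← Pi.zero_def, dyadicCube_zero] at this

theorem aedisjoint_dyadicCube (hl : 0 ≤ l) (k : ℕ) {j j' : Fin n → ℕ} (hjj : j ≠ j') :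
    AEDisjoint volume (dyadicCube a l k j) (dyadicCube a l k j') := by
  obtain ⟨i, hi⟩ := Function.ne_iff.mp hjj
  have hh : 0 ≤ l / 2 ^ k := by positivity
  refine measure_mono_null (fun x hx => ?_)
    (volume_setOf_apply_eq i (a i + max (j i) (j' i) * (l / 2 ^ k)))
  obtain ⟨h₁, h₁'⟩ := hx.1 i
  obtain ⟨h₂, h₂'⟩ := hx.2 i
  show x i = _
  rcases lt_or_gt_of_ne hi with h | h
  · have : ((j i : ℕ) : ℝ) + 1 ≤ j' i := by exact_mod_cast h
    rw [Nat.cast_max, max_eq_right (Nat.cast_le.2 h.le)]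
    linarith [mul_le_mul_of_nonneg_right this hh]
  · have : ((j' i : ℕ) : ℝ) + 1 ≤ j i := by exact_mod_cast h
    rw [Nat.cast_max, max_eq_left (Nat.cast_le.2 h.le)]
    linarith [mul_le_mul_of_nonneg_right this hh]

theorem mem_dyadicCube_dyadicIndex (hl : 0 < l) (k : ℕ) {x : EuclideanSpace ℝ (Fin n)}
    (hx : ∀ i, a i ≤ x i) : x ∈ dyadicCube a l k (dyadicIndex a l k x) := by
  intro i
  have hh : 0 < l / 2 ^ k := by positivity
  have h₁ := Nat.floor_le (div_nonneg (sub_nonneg.2 (hx i)) hh.le)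
  have h₂ := Nat.lt_floor_add_one ((x i - a i) / (l / 2 ^ k))
  rw [le_div_iff₀ hh] at h₁
  rw [div_lt_iff₀ hh] at h₂
  constructor <;> simp only [dyadicIndex] <;> linarith

theorem dyadicIndex_lt (hl : 0 < l) (k : ℕ) {x : EuclideanSpace ℝ (Fin n)} {i : Fin n}
    (hx : x i < a i + l) : dyadicIndex a l k x i < 2 ^ k := by
  rw [dyadicIndex, Nat.floor_lt' (by positivity), div_lt_iff₀ (by positivity)]
  push_cast
  field_simp
  linarith

theorem dyadicIndex_add_div (k m : ℕ) (x : EuclideanSpace ℝ (Fin n)) (i : Fin n) :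
    dyadicIndex a l (k + m) x i / 2 ^ m = dyadicIndex a l k x i := by
  rw [dyadicIndex, dyadicIndex, ← Nat.floor_div_natCast]
  congr 1
  push_cast
  rw [pow_add]
  rcases eq_or_ne l 0 with rfl | hl
  · simp
  · field_simp

end Dyadic

section Vitali

theorem volume_closedBall_three_mul_le (x : EuclideanSpace ℝ (Fin n)) {r : ℝ} (hr : 0 ≤ r) :
    volume (closedBall x (3 * r)) ≤ ENNReal.ofReal ((6 * √n) ^ n) * volume (closedBall x r) := by
  rw [Measure.addHaar_closedBall_mul volume x zero_le_three hr, finrank_euclideanSpace_fin,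
    Measure.addHaar_closedBall_center volume x]
  gcongr ENNReal.ofReal ?_ * _
  rcases n.eq_zero_or_pos with rfl | hn
  · simp
  · have : (1 : ℝ) ≤ √n := Real.one_le_sqrt.2 (by exact_mod_cast hn)
    exact pow_le_pow_left₀ zero_le_three (by linarith) n

noncomputable def cubeVitaliFamily (n : ℕ) :
    VitaliFamily (volume : Measure (EuclideanSpace ℝ (Fin n))) :=
  Vitali.vitaliFamily volume ((6 * √n) ^ n).toNNReal fun x =>
    (eventually_nhdsWithin_of_forall (s := Ioi 0) fun _ hr =>
      volume_closedBall_three_mul_le x (le_of_lt hr)).frequently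

variable {b : Fin n → ℝ} {s : ℝ} {x : EuclideanSpace ℝ (Fin n)}

theorem nonempty_interior_cube (hs : 0 < s) : (interior (cube b s)).Nonempty := by
  let c : EuclideanSpace ℝ (Fin n) := WithLp.toLp 2 fun i => b i + s / 2
  have hc : cube (fun i => c i - s / 2) (2 * (s / 2)) = cube b s := by
    simp [c, mul_div_cancel₀]
  refine (nonempty_ball (x := c).2 (half_pos hs)).mono (interior_maximal ?_ isOpen_ball)
  exact hc ▸ ball_subset_closedBall.trans (closedBall_subset_cube c (s / 2))

theorem cube_mem_cubeVitaliFamily_setsAt (hs : 0 < s) (hx : x ∈ cube b s) :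
    cube b s ∈ (cubeVitaliFamily n).setsAt x := by
  refine ⟨(isCompact_cube b s).isClosed, nonempty_interior_cube hs, s * √n,
    cube_subset_closedBall hs.le hx, ?_⟩
  calc volume (closedBall x (3 * (s * √n)))
      ≤ volume (cube _ (2 * (3 * (s * √n)))) := measure_mono (closedBall_subset_cube x _)
    _ = ENNReal.ofReal ((6 * √n) ^ n) * volume (cube b s) := by
      rw [volume_cube, volume_cube, ← ENNReal.ofReal_pow (by positivity),
        ← ENNReal.ofReal_pow hs.le, ← ENNReal.ofReal_mul (by positivity)]
      ring_nf

theorem tendsto_cube_filterAt {b : ℕ → Fin n → ℝ} {s : ℕ → ℝ} (hs : ∀ k, 0 < s k)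
    (hx : ∀ k, x ∈ cube (b k) (s k)) (hs₀ : Tendsto s atTop (𝓝 0)) :
    Tendsto (fun k => cube (b k) (s k)) atTop ((cubeVitaliFamily n).filterAt x) := by
  refine (VitaliFamily.tendsto_filterAt_iff _).2
    ⟨.of_forall fun k => cube_mem_cubeVitaliFamily_setsAt (hs k) (hx k), fun ε hε => ?_⟩
  have : Tendsto (fun k => s k * √n) atTop (𝓝 0) := by simpa using hs₀.mul_const √n
  filter_upwards [this.eventually_le_const hε] with k hk
  exact (cube_subset_closedBall (hs k).le (hx k)).trans (closedBall_subset_closedBall hk)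

end Vitali

section CalderonZygmund

variable {a : Fin n → ℝ} {l : ℝ} {g : EuclideanSpace ℝ (Fin n) → ℝ≥0∞} {t : ℝ≥0∞}

/-- The maximal dyadic subcubes of `cube a l`, indexed by generation and position, on which the
mean of `g` exceeds `t`. -/
def czCubes (g : EuclideanSpace ℝ (Fin n) → ℝ≥0∞) (t : ℝ≥0∞) (a : Fin n → ℝ) (l : ℝ) :
    Set (ℕ × (Fin n → ℕ)) :=
  {p | (∀ i, p.2 i < 2 ^ p.1) ∧
    t * volume (dyadicCube a l p.1 p.2) < ∫⁻ x in dyadicCube a l p.1 p.2, g x ∧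
    ∀ k < p.1, ∫⁻ x in dyadicCube a l k (fun i => p.2 i / 2 ^ (p.1 - k)), g x ≤
      t * volume (dyadicCube a l k (fun i => p.2 i / 2 ^ (p.1 - k)))}

theorem dyadicCube_subset_of_mem_czCubes (hl : 0 ≤ l) {p : ℕ × (Fin n → ℕ)}
    (hp : p ∈ czCubes g t a l) : dyadicCube a l p.1 p.2 ⊆ cube a l :=
  dyadicCube_subset_cube hl hp.1

theorem aedisjoint_of_mem_czCubes (hl : 0 ≤ l) {p q : ℕ × (Fin n → ℕ)}
    (hp : p ∈ czCubes g t a l) (hq : q ∈ czCubes g t a l) (hpq : p.1 ≤ q.1) (hne : p ≠ q) :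
    AEDisjoint volume (dyadicCube a l p.1 p.2) (dyadicCube a l q.1 q.2) := by
  set m : Fin n → ℕ := fun i => q.2 i / 2 ^ (q.1 - p.1)
  have hsub : dyadicCube a l q.1 q.2 ⊆ dyadicCube a l p.1 m := by
    simpa only [Nat.add_sub_cancel' hpq] using
      dyadicCube_add_subset (a := a) hl p.1 (q.1 - p.1) q.2
  have hm : m ≠ p.2 := by
    rintro hm
    rcases hpq.eq_or_lt with heq | hlt
    · refine hne (Prod.ext heq ?_)
      rw [← hm]
      ext i
      simp [m, heq]
    · have h : ∫⁻ x in dyadicCube a l p.1 m, g x ≤ t * volume (dyadicCube a l p.1 m) :=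
        hq.2.2 p.1 hlt
      rw [hm] at h
      exact h.not_gt hp.2.1
  exact ((aedisjoint_dyadicCube hl p.1 hm).mono hsub subset_rfl).symm

theorem pairwise_aedisjoint_czCubes (hl : 0 ≤ l) :
    (czCubes g t a l).Pairwise
      (AEDisjoint volume on fun p : ℕ × (Fin n → ℕ) => dyadicCube a l p.1 p.2) := by
  intro p hp q hq hne
  rcases le_total p.1 q.1 with h | h
  · exact aedisjoint_of_mem_czCubes hl hp hq h hne
  · exact (aedisjoint_of_mem_czCubes hl hq hp h hne.symm).symm

theorem lintegral_le_of_mem_czCubes (hl : 0 ≤ l)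
    (hQ : ∫⁻ x in cube a l, g x ≤ t * volume (cube a l)) {p : ℕ × (Fin n → ℕ)}
    (hp : p ∈ czCubes g t a l) :
    ∫⁻ x in dyadicCube a l p.1 p.2, g x ≤ 2 ^ n * t * volume (dyadicCube a l p.1 p.2) := by
  obtain ⟨_ | k, j⟩ := p
  · have hj : j = 0 := funext fun i => Nat.lt_one_iff.1 (hp.1 i)
    subst hj
    exact absurd hQ (not_le.2 (by simpa only [dyadicCube_zero] using hp.2.1))
  · have hparent := hp.2.2 k k.lt_succ_self
    simp only [Nat.add_sub_cancel_left, pow_one] at hparent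
    calc ∫⁻ x in dyadicCube a l (k + 1) j, g x
        ≤ ∫⁻ x in dyadicCube a l k (fun i => j i / 2), g x :=
          lintegral_mono_set (by simpa using dyadicCube_add_subset (a := a) hl k 1 j)
      _ ≤ t * volume (dyadicCube a l k (fun i => j i / 2)) := hparent
      _ = 2 ^ n * t * volume (dyadicCube a l (k + 1) j) := by
          rw [volume_dyadicCube_eq_two_pow_mul k _ j]
          ring

theorem tsum_volume_czCubes_le (hl : 0 ≤ l) (ht₀ : t ≠ 0) (ht : t ≠ ⊤) :
    ∑' p : czCubes g t a l, volume (dyadicCube a l p.1.1 p.1.2) ≤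
      t⁻¹ * ∫⁻ x in cube a l, g x := by
  calc ∑' p : czCubes g t a l, volume (dyadicCube a l p.1.1 p.1.2)
      ≤ ∑' p : czCubes g t a l, t⁻¹ * ∫⁻ x in dyadicCube a l p.1.1 p.1.2, g x := by
        refine ENNReal.tsum_le_tsum fun p => ?_
        exact (ENNReal.inv_mul_cancel_left ht₀ ht).symm.trans_le
          (mul_le_mul_right p.2.2.1.le _)
    _ = t⁻¹ * ∫⁻ x in ⋃ p ∈ czCubes g t a l, dyadicCube a l p.1 p.2, g x := by
        rw [ENNReal.tsum_mul_left,
          lintegral_biUnion₀ (s := fun p : ℕ × (Fin n → ℕ) => dyadicCube a l p.1 p.2)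
            (to_countable _) (fun p _ => (measurableSet_cube _ _).nullMeasurableSet)
            (pairwise_aedisjoint_czCubes hl)]
    _ ≤ t⁻¹ * ∫⁻ x in cube a l, g x := by
        gcongr
        exact iUnion₂_subset fun p hp => dyadicCube_subset_of_mem_czCubes hl hp

theorem mem_biUnion_czCubes (hl : 0 < l) {x : EuclideanSpace ℝ (Fin n)} (hx : x ∈ cube a l)
    (htop : ∀ i, x i < a i + l) {k : ℕ}
    (hk : t * volume (dyadicCube a l k (dyadicIndex a l k x)) <
      ∫⁻ y in dyadicCube a l k (dyadicIndex a l k x), g y) :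
    x ∈ ⋃ p ∈ czCubes g t a l, dyadicCube a l p.1 p.2 := by
  classical
  have hex : ∃ k, t * volume (dyadicCube a l k (dyadicIndex a l k x)) <
      ∫⁻ y in dyadicCube a l k (dyadicIndex a l k x), g y := ⟨k, hk⟩
  set k₀ := Nat.find hex
  -- the first heavy cube in the chain of dyadic cubes containing `x` is maximal
  refine mem_biUnion (x := (k₀, dyadicIndex a l k₀ x)) ⟨fun i => dyadicIndex_lt hl k₀ (htop i),
    Nat.find_spec hex, fun k hk => ?_⟩ (mem_dyadicCube_dyadicIndex hl k₀ fun i => (hx i).1)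
  have hanc : (fun i => dyadicIndex a l k₀ x i / 2 ^ (k₀ - k)) = dyadicIndex a l k x := by
    ext i
    simpa only [Nat.add_sub_cancel' hk.le] using
      dyadicIndex_add_div (a := a) (l := l) k (k₀ - k) x i
  rw [hanc]
  exact not_lt.1 (Nat.find_min hex hk)

theorem ae_le_of_notMem_czCubes (hl : 0 < l) (hg : AEMeasurable g (volume.restrict (cube a l)))
    (hQ : ∫⁻ x in cube a l, g x ≠ ⊤) :
    ∀ᵐ x, x ∈ cube a l → x ∉ ⋃ p ∈ czCubes g t a l, dyadicCube a l p.1 p.2 → g x ≤ t := by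
  -- the indicator makes `g` globally integrable, as the differentiation theorem requires
  have hdiff := (cubeVitaliFamily n).ae_tendsto_lintegral_div
    ((aemeasurable_indicator_iff (measurableSet_cube a l)).2 hg)
    (by rwa [lintegral_indicator (measurableSet_cube a l)])
  have hface : ∀ᵐ x : EuclideanSpace ℝ (Fin n), ∀ i, x i ≠ a i + l :=
    ae_all_iff.2 fun i => measure_mono_null (fun x hx => not_not.1 hx) (volume_setOf_apply_eq i _)
  filter_upwards [hdiff, hface] with x hx hxface hxQ hxS
  have htop : ∀ i, x i < a i + l := fun i => (hxQ i).2.lt_of_ne (hxface i)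
  have hsub : ∀ k, dyadicCube a l k (dyadicIndex a l k x) ⊆ cube a l := fun k =>
    dyadicCube_subset_cube hl.le fun i => dyadicIndex_lt hl k (htop i)
  have hlim := hx.comp (tendsto_cube_filterAt (fun k => by positivity)
    (fun k => mem_dyadicCube_dyadicIndex hl k fun i => (hxQ i).1)
    (tendsto_const_nhds.div_atTop (tendsto_pow_atTop_atTop_of_one_lt one_lt_two)))
  rw [indicator_of_mem hxQ] at hlim
  refine le_of_tendsto' hlim fun k => ENNReal.div_le_of_le_mul ?_
  beta_reduce
  rw [setLIntegral_congr_fun (measurableSet_cube _ _)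
    fun y hy => indicator_of_mem (hsub k hy) g]
  exact not_lt.1 fun hk => hxS (mem_biUnion_czCubes hl hxQ htop hk)

end CalderonZygmund

section Averages

variable {α : Type*} [MeasurableSpace α] {μ : Measure α} {s : Set α} {f : α → ℝ} {c : ℝ}

theorem abs_setAverage_sub_le (hs₀ : μ s ≠ 0) (hs : μ s ≠ ⊤) (hf : IntegrableOn f s μ) {M : ℝ}
    (hM : 0 ≤ M) (h : ∫⁻ x in s, ‖f x - c‖ₑ ∂μ ≤ ENNReal.ofReal M * μ s) :
    |(⨍ x in s, f x ∂μ) - c| ≤ M := by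
  have hint : ∫ x in s, (f x - c) ∂μ = μ.real s * ((⨍ x in s, f x ∂μ) - c) := by
    rw [integral_sub hf (integrableOn_const hs), setIntegral_const, setAverage_eq, smul_eq_mul,
      smul_eq_mul, mul_sub, mul_inv_cancel_left₀ ((measureReal_ne_zero_iff hs).2 hs₀)]
  have := (enorm_integral_le_lintegral_enorm _).trans h
  rw [hint, enorm_mul, Real.enorm_of_nonneg measureReal_nonneg, measureReal_def,
    ENNReal.ofReal_toReal hs, mul_comm, ENNReal.mul_le_mul_iff_left hs₀ hs,
    Real.enorm_eq_ofReal_abs, ENNReal.ofReal_le_ofReal_iff hM] at this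
  exact this

theorem lintegral_enorm_sub_le_of_setAverage_le (hs : μ s ≠ ⊤) (hf : IntegrableOn f s μ) {M : ℝ}
    (h : ⨍ x in s, |f x - c| ∂μ ≤ M) :
    ∫⁻ x in s, ‖f x - c‖ₑ ∂μ ≤ ENNReal.ofReal M * μ s := by
  rcases eq_or_ne (μ s) 0 with hs₀ | hs₀
  · simp [Measure.restrict_eq_zero.2 hs₀]
  have hav := ofReal_setAverage (f := fun x => |f x - c|) (hf.sub (integrableOn_const hs)).abs
    (.of_forall fun x => abs_nonneg (f x - c))
  calc ∫⁻ x in s, ‖f x - c‖ₑ ∂μ = (∫⁻ x in s, ‖f x - c‖ₑ ∂μ) / μ s * μ s :=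
        (ENNReal.div_mul_cancel hs₀ hs).symm
    _ = ENNReal.ofReal (⨍ x in s, |f x - c| ∂μ) * μ s := by
        simp_rw [Real.enorm_eq_ofReal_abs]
        rw [hav]
    _ ≤ ENNReal.ofReal M * μ s := by gcongr

theorem measure_setOf_lt_abs_le (hf : AEStronglyMeasurable f (μ.restrict s)) {r : ℝ} (hr : 0 < r) :
    μ {x | x ∈ s ∧ r < |f x|} ≤ (ENNReal.ofReal r)⁻¹ * ∫⁻ x in s, ‖f x‖ₑ ∂μ := by
  calc μ {x | x ∈ s ∧ r < |f x|} ≤ μ.restrict s {x | ENNReal.ofReal r ≤ ‖f x‖ₑ} := by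
        refine (measure_mono (t := {x | ENNReal.ofReal r ≤ ‖f x‖ₑ} ∩ s)
          fun x hx => ⟨?_, hx.1⟩).trans (Measure.le_restrict_apply _ _)
        rw [mem_ofPred_eq, Real.enorm_eq_ofReal_abs]
        exact ENNReal.ofReal_le_ofReal hx.2.le
    _ ≤ (∫⁻ x in s, ‖f x‖ₑ ∂μ) / ENNReal.ofReal r :=
        meas_ge_le_lintegral_div hf.enorm (by simpa using hr) ENNReal.ofReal_ne_top
    _ = (ENNReal.ofReal r)⁻¹ * ∫⁻ x in s, ‖f x‖ₑ ∂μ := ENNReal.div_eq_inv_mul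

end Averages

section JohnNirenberg

variable {f : EuclideanSpace ℝ (Fin n) → ℝ} {a : Fin n → ℝ} {l : ℝ}

theorem integrableOn_cube (hf : LocallyIntegrable f volume) (a : Fin n → ℝ) (l : ℝ) :
    IntegrableOn f (cube a l) volume :=
  hf.integrableOn_isCompact (isCompact_cube a l)

theorem ae_exists_mem_czCubes_lt_abs_sub (hf : LocallyIntegrable f volume) (hl : 0 < l) {c t : ℝ}
    (ht : 0 ≤ t) (hQ : ∫⁻ x in cube a l, ‖f x - c‖ₑ ≤ ENNReal.ofReal t * volume (cube a l))
    {r : ℝ} (hr : 0 ≤ r) :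
    ∀ᵐ x, x ∈ cube a l → 2 ^ n * t + r < |f x - c| →
      ∃ p ∈ czCubes (fun y => ‖f y - c‖ₑ) (ENNReal.ofReal t) a l,
        x ∈ dyadicCube a l p.1 p.2 ∧ r < |f x - ⨍ y in dyadicCube a l p.1 p.2, f y| := by
  have hfc : IntegrableOn (fun x => f x - c) (cube a l) volume :=
    (integrableOn_cube hf a l).sub (integrableOn_const (volume_cube_ne_top a l))
  have hfin : ∫⁻ x in cube a l, ‖f x - c‖ₑ ≠ ⊤ := hfc.2.ne
  filter_upwards [ae_le_of_notMem_czCubes hl hfc.1.enorm hfin] with x hx hxQ hxr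
  have hxS : x ∈ ⋃ p ∈ czCubes (fun y => ‖f y - c‖ₑ) (ENNReal.ofReal t) a l,
      dyadicCube a l p.1 p.2 := by
    by_contra hxS
    have := hx hxQ hxS
    rw [Real.enorm_eq_ofReal_abs, ENNReal.ofReal_le_ofReal_iff ht] at this
    have : t ≤ 2 ^ n * t := le_mul_of_one_le_left ht (one_le_pow₀ one_le_two)
    linarith
  obtain ⟨p, hp, hxp⟩ := mem_iUnion₂.1 hxS
  refine ⟨p, hp, hxp, ?_⟩
  have hmean : |(⨍ y in dyadicCube a l p.1 p.2, f y) - c| ≤ 2 ^ n * t := by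
    refine abs_setAverage_sub_le (volume_cube_ne_zero _ (by positivity)) (volume_cube_ne_top _ _)
      (integrableOn_cube hf _ _) (by positivity) ?_
    rw [ENNReal.ofReal_mul (by positivity), ENNReal.ofReal_pow zero_le_two, ENNReal.ofReal_ofNat]
    exact lintegral_le_of_mem_czCubes hl.le hQ hp
  have := abs_sub_abs_le_abs_sub (f x - c) ((⨍ y in dyadicCube a l p.1 p.2, f y) - c)
  rw [sub_sub_sub_cancel_right] at this
  linarith

variable {B : ℝ}

theorem volume_setOf_lt_abs_sub_setAverage_le_half (hf : LocallyIntegrable f volume) (hB : 0 < B)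
    (hosc : ∀ (b : Fin n → ℝ) (s : ℝ), 0 < s → ∫⁻ x in cube b s, ‖f x - ⨍ y in cube b s, f y‖ₑ ≤
      ENNReal.ofReal B * volume (cube b s))
    {r : ℝ} (hr : 0 ≤ r) {ε : ℝ≥0∞}
    (hε : ∀ (b : Fin n → ℝ) (s : ℝ), 0 < s →
      volume {x | x ∈ cube b s ∧ r < |f x - ⨍ y in cube b s, f y|} ≤
        ε * (ENNReal.ofReal B)⁻¹ * ∫⁻ x in cube b s, ‖f x - ⨍ y in cube b s, f y‖ₑ)
    (hl : 0 < l) :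
    volume {x | x ∈ cube a l ∧ 2 ^ (n + 1) * B + r < |f x - ⨍ y in cube a l, f y|} ≤
      2⁻¹ * ε * (ENNReal.ofReal B)⁻¹ * ∫⁻ x in cube a l, ‖f x - ⨍ y in cube a l, f y‖ₑ := by
  set c := ⨍ y in cube a l, f y
  set S := czCubes (fun y => ‖f y - c‖ₑ) (ENNReal.ofReal (2 * B)) a l
  have hB₀ : ENNReal.ofReal B ≠ 0 := by simpa using hB
  have hQ : ∫⁻ x in cube a l, ‖f x - c‖ₑ ≤ ENNReal.ofReal (2 * B) * volume (cube a l) :=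
    (hosc a l hl).trans (by gcongr; linarith)
  have hcover := ae_exists_mem_czCubes_lt_abs_sub hf hl (by positivity) hQ hr
  calc volume {x | x ∈ cube a l ∧ 2 ^ (n + 1) * B + r < |f x - c|}
      ≤ volume (⋃ p ∈ S, {x | x ∈ dyadicCube a l p.1 p.2 ∧
          r < |f x - ⨍ y in dyadicCube a l p.1 p.2, f y|}) := by
        refine measure_mono_ae (hcover.mono fun x hx ⟨hxQ, hxE⟩ => ?_)
        obtain ⟨p, hp, hxp⟩ := hx hxQ (by rw [pow_succ] at hxE; linarith)
        exact mem_iUnion₂.2 ⟨p, hp, hxp⟩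
    _ ≤ ∑' p : S, ε * volume (dyadicCube a l p.1.1 p.1.2) := by
        refine (measure_biUnion_le _ (to_countable _) _).trans (ENNReal.tsum_le_tsum fun p => ?_)
        have hs : 0 < l / 2 ^ p.1.1 := by positivity
        calc _ ≤ ε * ((ENNReal.ofReal B)⁻¹ * ∫⁻ x in dyadicCube a l p.1.1 p.1.2,
                ‖f x - ⨍ y in dyadicCube a l p.1.1 p.1.2, f y‖ₑ) := by
              rw [← mul_assoc]; exact hε _ _ hs
          _ ≤ ε * ((ENNReal.ofReal B)⁻¹ *
                (ENNReal.ofReal B * volume (dyadicCube a l p.1.1 p.1.2))) := by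
              gcongr; exact hosc _ _ hs
          _ = ε * volume (dyadicCube a l p.1.1 p.1.2) := by
              rw [ENNReal.inv_mul_cancel_left hB₀ ENNReal.ofReal_ne_top]
    _ = ε * ∑' p : S, volume (dyadicCube a l p.1.1 p.1.2) := ENNReal.tsum_mul_left
    _ ≤ ε * ((ENNReal.ofReal (2 * B))⁻¹ * ∫⁻ x in cube a l, ‖f x - c‖ₑ) := by
        gcongr
        exact tsum_volume_czCubes_le hl.le (by simpa using hB) ENNReal.ofReal_ne_top
    _ = 2⁻¹ * ε * (ENNReal.ofReal B)⁻¹ * ∫⁻ x in cube a l, ‖f x - c‖ₑ := by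
        rw [ENNReal.ofReal_mul zero_le_two, ENNReal.ofReal_ofNat,
          ENNReal.mul_inv (by simp) (by simp)]
        ring

theorem volume_setOf_lt_abs_sub_setAverage_le (hf : LocallyIntegrable f volume) (hB : 0 < B)
    (hosc : ∀ (b : Fin n → ℝ) (s : ℝ), 0 < s → ∫⁻ x in cube b s, ‖f x - ⨍ y in cube b s, f y‖ₑ ≤
      ENNReal.ofReal B * volume (cube b s)) (k : ℕ) (hl : 0 < l) :
    volume {x | x ∈ cube a l ∧ B * (1 + k * 2 ^ (n + 1)) < |f x - ⨍ y in cube a l, f y|} ≤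
      2⁻¹ ^ k * (ENNReal.ofReal B)⁻¹ * ∫⁻ x in cube a l, ‖f x - ⨍ y in cube a l, f y‖ₑ := by
  induction k generalizing a l with
  | zero =>
    simpa using measure_setOf_lt_abs_le
      ((integrableOn_cube hf a l).sub (integrableOn_const (volume_cube_ne_top a l))).1 hB
  | succ k ih =>
    have hthr : B * (1 + ↑(k + 1) * 2 ^ (n + 1)) = 2 ^ (n + 1) * B + B * (1 + k * 2 ^ (n + 1)) := by
      push_cast; ring
    rw [hthr, pow_succ' (2⁻¹ : ℝ≥0∞) k]
    exact volume_setOf_lt_abs_sub_setAverage_le_half hf hB hosc (by positivity) (fun _ _ => ih) hl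

end JohnNirenberg

theorem inv_two_pow_floor_le {σ : ℝ} (hσ : 1 ≤ σ) (x : ℝ) :
    (2⁻¹ : ℝ) ^ ⌊(x - 1) / σ⌋₊ ≤ 4 * Real.exp (-(Real.log 2 / σ) * x) := by
  set k := ⌊(x - 1) / σ⌋₊
  have hx : x ≤ σ * (k + 2) := by
    have := (div_lt_iff₀ (by linarith)).1 (Nat.lt_floor_add_one ((x - 1) / σ))
    nlinarith
  have hlog : 0 < Real.log 2 := Real.log_pos one_lt_two
  calc (2⁻¹ : ℝ) ^ k = 4 * Real.exp (-Real.log 2 * (k + 2)) := by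
        rw [show -Real.log 2 * (k + 2) = ((k + 2 : ℕ) : ℝ) * -Real.log 2 by push_cast; ring,
          Real.exp_nat_mul, Real.exp_neg, Real.exp_log two_pos, pow_add]
        ring
    _ ≤ 4 * Real.exp (-(Real.log 2 / σ) * x) := by
        gcongr 4 * Real.exp ?_
        rw [neg_mul, neg_mul, neg_le_neg_iff, div_mul_eq_mul_div, div_le_iff₀ (by linarith)]
        nlinarith

theorem john_nirenberg_general (n : ℕ) :
    ∃ c C : ℝ, 0 < c ∧ 0 < C ∧
      ∀ f : EuclideanSpace ℝ (Fin n) → ℝ, LocallyIntegrable f volume →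
        BddAbove {r : ℝ | ∃ a l, 0 < l ∧ r = oscAvg f a l} →
        0 < bmoSeminorm f →
        ∀ (a : Fin n → ℝ) (l : ℝ), 0 < l → ∀ α : ℝ, bmoSeminorm f ≤ α →
          volume {x | x ∈ cube a l ∧ α < |f x - ⨍ y in cube a l, f y|} ≤
            ENNReal.ofReal ((C / bmoSeminorm f) * Real.exp (-c * α / bmoSeminorm f) *
              ∫ x in cube a l, |f x - ⨍ y in cube a l, f y|) := by
  refine ⟨Real.log 2 / 2 ^ (n + 1), 4, by positivity, by norm_num, ?_⟩
  intro f hf hbdd hB a l hl α hα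
  set B := bmoSeminorm f
  have hosc (b : Fin n → ℝ) (s : ℝ) (hs : 0 < s) :=
    lintegral_enorm_sub_le_of_setAverage_le (volume_cube_ne_top b s) (integrableOn_cube hf b s)
      (le_csSup hbdd ⟨b, s, hs, rfl⟩)
  set k := ⌊(α / B - 1) / 2 ^ (n + 1)⌋₊
  have hk : B * (1 + k * 2 ^ (n + 1)) ≤ α := by
    have := Nat.floor_le (div_nonneg (sub_nonneg.2 ((one_le_div hB).2 hα))
      (by positivity : (0 : ℝ) ≤ 2 ^ (n + 1)))
    rw [le_div_iff₀ (by positivity), le_sub_iff_add_le, le_div_iff₀ hB] at this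
    linarith
  calc volume {x | x ∈ cube a l ∧ α < |f x - ⨍ y in cube a l, f y|}
      ≤ volume {x | x ∈ cube a l ∧ B * (1 + k * 2 ^ (n + 1)) < |f x - ⨍ y in cube a l, f y|} :=
        measure_mono fun x hx => ⟨hx.1, hk.trans_lt hx.2⟩
    _ ≤ 2⁻¹ ^ k * (ENNReal.ofReal B)⁻¹ * ∫⁻ x in cube a l, ‖f x - ⨍ y in cube a l, f y‖ₑ :=
        volume_setOf_lt_abs_sub_setAverage_le hf hB hosc k hl
    _ = ENNReal.ofReal ((2⁻¹ ^ k / B) * ∫ x in cube a l, |f x - ⨍ y in cube a l, f y|) := by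
        rw [← ofReal_integral_norm_eq_lintegral_enorm (f := fun x => f x - ⨍ y in cube a l, f y)
            ((integrableOn_cube hf a l).sub
            (integrableOn_const (volume_cube_ne_top a l))), ENNReal.ofReal_mul (by positivity),
          ENNReal.ofReal_div_of_pos hB, ENNReal.ofReal_pow (by norm_num),
          ENNReal.ofReal_inv_of_pos two_pos, ENNReal.ofReal_ofNat, div_eq_mul_inv]
        simp only [Real.norm_eq_abs]
    _ ≤ _ := by
        gcongr
        have := inv_two_pow_floor_le (one_le_pow₀ one_le_two : (1 : ℝ) ≤ 2 ^ (n + 1)) (α / B)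
        rw [← mul_div_assoc] at this
        rw [div_mul_eq_mul_div]
        exact div_le_div_of_nonneg_right this hB.le

/-- **John–Nirenberg inequality.** There are constants `c, C > 0` depending only on `n` such
that if `f ∈ BMO(ℝⁿ)` with `‖f‖_{BMO} > 0`, then for every cube `Q ⊆ ℝⁿ` and every
`α ≥ ‖f‖_{BMO}`,
`|{x ∈ Q : |f x - f_Q| > α}| ≤ (C/‖f‖_{BMO}) e^{-cα/‖f‖_{BMO}} ∫_Q |f - f_Q|`. -/
theorem john_nirenberg (n : ℕ) (hn : 0 < n) :
    ∃ c C : ℝ, 0 < c ∧ 0 < C ∧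
      ∀ f : EuclideanSpace ℝ (Fin n) → ℝ, LocallyIntegrable f volume →
        BddAbove {r : ℝ | ∃ a l, 0 < l ∧ r = oscAvg f a l} →
        0 < bmoSeminorm f →
        ∀ (a : Fin n → ℝ) (l : ℝ), 0 < l → ∀ α : ℝ, bmoSeminorm f ≤ α →
          volume {x | x ∈ cube a l ∧ α < |f x - ⨍ y in cube a l, f y|} ≤
            ENNReal.ofReal ((C / bmoSeminorm f) * Real.exp (-c * α / bmoSeminorm f) *
              ∫ x in cube a l, |f x - ⨍ y in cube a l, f y|) :=
  john_nirenberg_general n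
end
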